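/- arXiv:1909.04100 — 3 statements merged into one kernel-verified Lean document; each statement's English description precedes it below -/
import Mathlib

section
/- Over the rationals, the tensor power V^{⊗r} of the d-dimensional permutation representation V of S_d decomposes as a direct sum, over all set partitions α of {1,...,r} into at most d parts, of submodules N^α, where N^α is isomorphic to the permutation module M^{(d − l(α), 1^{l(α)})}; here N^α is the span of pure tensors v_{i_1}⊗...⊗v_{i_r} such that i_p = i_q if and only if p and q lie in the same part of α. -/
def blockIdx (α : List ℕ) (x : ℕ) : ℕ :=
  ((List.range α.length).filter (fun k => decide ((α.take (k + 1)).sum ≤ x))).length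

def youngSubgroup (n : ℕ) (α : List ℕ) : Subgroup (Equiv.Perm (Fin n)) where
  carrier := {σ | ∀ x : Fin n, blockIdx α (σ x) = blockIdx α x}
  mul_mem' := fun {a b} ha hb x => (ha (b x)).trans (hb x)
  one_mem' := fun _ => rfl
  inv_mem' := fun {a} ha x => by
    have h := ha (a⁻¹ x)
    rw [show a (a⁻¹ x) = x from a.apply_symm_apply x] at h
    exact h.symm

/-- The diagonal action of `σ ∈ S_d` on `V^{⊗ r}` (for `V = ℚ^d` the permutation
representation), in the model of `V^{⊗ r}` as the free module on functions `Fin r → Fin d`. -/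
noncomputable def diagAction (d r : ℕ) (σ : Equiv.Perm (Fin d)) :
    ((Fin r → Fin d) →₀ ℚ) →ₗ[ℚ] ((Fin r → Fin d) →₀ ℚ) :=
  Finsupp.lmapDomain ℚ ℚ (fun g => ⇑σ ∘ g)

/-- The summand `N^s` of `V^{⊗ r}` attached to a set partition (setoid) `s` of `{1,…,r}`:
the span of pure tensors `v_{i_1} ⊗ ⋯ ⊗ v_{i_r}` such that `i_p = i_q` iff `p ∼ q` in `s`. -/
noncomputable def kerPartSpace (r d : ℕ) (s : Setoid (Fin r)) :
    Submodule ℚ ((Fin r → Fin d) →₀ ℚ) :=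
  Submodule.span ℚ {v | ∃ g : Fin r → Fin d,
    (∀ x y : Fin r, s.r x y ↔ g x = g y) ∧ v = Finsupp.single g 1}

lemma filter_range_length (c n : ℕ) :
    ((List.range n).filter (fun k => decide (k < c))).length = min c n := by
  induction n with
  | zero => simp
  | succ n ih =>
    rw [List.range_succ, List.filter_append, List.length_append]
    by_cases h : n < c <;> simp [h, ih] <;> omega

lemma blockIdx_eq (d m : ℕ) (hm : m ≤ d) (x : ℕ) (hx : x < d) :
    blockIdx ((d - m) :: List.replicate m 1) x =
      if x < d - m then 0 else x - (d - m) + 1 := by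
  unfold blockIdx
  have hlen : ((d - m) :: List.replicate m 1).length = m + 1 := by simp
  rw [hlen]
  have hsum : ∀ k ∈ List.range (m + 1),
      (decide ((((d - m) :: List.replicate m 1).take (k + 1)).sum ≤ x)) =
      (decide (d - m + k ≤ x)) := by
    intro k hk
    rw [List.mem_range] at hk
    have : (((d - m) :: List.replicate m 1).take (k + 1)).sum = d - m + k := by
      rw [List.take_succ_cons, List.sum_cons, List.take_replicate, List.sum_replicate]
      simp; omega
    rw [this]
  rw [List.filter_congr hsum]
  by_cases hlt : x < d - m
  · rw [if_pos hlt, List.filter_eq_nil_iff.mpr ?_]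
    · rfl
    · intro k hk
      simp only [decide_eq_true_eq]
      omega
  · rw [if_neg hlt]
    have h2 : ∀ k ∈ List.range (m + 1),
        (decide (d - m + k ≤ x)) = (decide (k < x - (d - m) + 1)) := by
      intro k hk; rw [List.mem_range] at hk
      rcases Nat.lt_or_ge k (x - (d-m) + 1) with h | h <;> simp_all <;> omega
    rw [List.filter_congr h2, filter_range_length]
    omega

lemma young_mem_iff (d m : ℕ) (hm : m ≤ d) (σ : Equiv.Perm (Fin d)) :
    σ ∈ youngSubgroup d ((d - m) :: List.replicate m 1) ↔
      ∀ j : Fin m, σ ⟨d - m + j.1, by omega⟩ = ⟨d - m + j.1, by omega⟩ := by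
  have hval : ∀ y : Fin d, blockIdx ((d - m) :: List.replicate m 1) y =
      if (y : ℕ) < d - m then 0 else (y : ℕ) - (d - m) + 1 :=
    fun y => blockIdx_eq d m hm y y.2
  have hmem : σ ∈ youngSubgroup d ((d - m) :: List.replicate m 1) ↔
      ∀ x : Fin d, blockIdx ((d - m) :: List.replicate m 1) (σ x) =
        blockIdx ((d - m) :: List.replicate m 1) x := Iff.rfl
  rw [hmem]
  constructor
  · intro h j
    have hb := h ⟨d - m + j.1, by omega⟩
    rw [hval, hval] at hb
    have hy2 : ((σ ⟨d - m + j.1, by omega⟩ : Fin d) : ℕ) < d :=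
      (σ ⟨d - m + j.1, by omega⟩).2
    have hj2 : j.1 < m := j.2
    apply Fin.ext
    dsimp only at hb ⊢
    split_ifs at hb <;> omega
  · intro h x
    rw [hval, hval]
    by_cases hx : (x : ℕ) < d - m
    · rw [if_pos hx]
      have hσx : ((σ x : Fin d) : ℕ) < d - m := by
        by_contra hc
        push_neg at hc
        have hlt : ((σ x : Fin d) : ℕ) - (d - m) < m := by have := (σ x).2; omega
        have h2 := h ⟨((σ x : Fin d) : ℕ) - (d - m), hlt⟩
        have h1 : σ x = (⟨d - m + (((σ x : Fin d) : ℕ) - (d - m)),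
            by have := (σ x).2; omega⟩ : Fin d) := by
          apply Fin.ext; dsimp only; omega
        have h3 : x = (⟨d - m + (((σ x : Fin d) : ℕ) - (d - m)),
            by have := (σ x).2; omega⟩ : Fin d) := σ.injective (h1.trans h2.symm)
        rw [h3] at hx; dsimp only at hx; omega
      rw [if_pos hσx]
    · have hlt : (x : ℕ) - (d - m) < m := by have := x.2; omega
      have h1 : x = (⟨d - m + ((x : ℕ) - (d - m)), by have := x.2; omega⟩ : Fin d) := by
        apply Fin.ext; dsimp only; omega
      have hfix : σ x = x := by
        conv_lhs => rw [h1]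
        exact (h ⟨(x : ℕ) - (d - m), hlt⟩).trans h1.symm
      rw [hfix]

lemma exists_perm_comp {m d : ℕ} (a b : Fin m → Fin d)
    (ha : Function.Injective a) (hb : Function.Injective b) :
    ∃ τ : Equiv.Perm (Fin d), ∀ j, τ (a j) = b j := by
  classical
  have hca : Fintype.card ↥(Set.range a)ᶜ = Fintype.card ↥(Set.range b)ᶜ := by
    rw [Fintype.card_compl_set, Fintype.card_compl_set,
      Set.card_range_of_injective ha, Set.card_range_of_injective hb]
  let ea : ↥(Set.range a) ≃ ↥(Set.range b) :=
    (Equiv.ofInjective a ha).symm.trans (Equiv.ofInjective b hb)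
  let ec : ↥(Set.range a)ᶜ ≃ ↥(Set.range b)ᶜ := Fintype.equivOfCardEq hca
  refine ⟨(Equiv.sumCompl (· ∈ Set.range a)).symm.trans
    ((ea.sumCongr ec).trans (Equiv.sumCompl (· ∈ Set.range b))), fun j => ?_⟩
  have h1 : (Equiv.sumCompl (· ∈ Set.range a)).symm (a j) =
      Sum.inl ⟨a j, ⟨j, rfl⟩⟩ := Equiv.sumCompl_symm_apply_of_pos ⟨j, rfl⟩
  have h3 : ea ⟨a j, ⟨j, rfl⟩⟩ = ⟨b j, ⟨j, rfl⟩⟩ := by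
    show (Equiv.ofInjective b hb) ((Equiv.ofInjective a ha).symm ⟨a j, ⟨j, rfl⟩⟩) = _
    rw [show (⟨a j, ⟨j, rfl⟩⟩ : ↥(Set.range a)) = (Equiv.ofInjective a ha) j from rfl,
      Equiv.symm_apply_apply]
    rfl
  rw [Equiv.trans_apply, Equiv.trans_apply, h1]
  exact congrArg Subtype.val h3

lemma cond_iff {r d : ℕ} (s : Setoid (Fin r)) (g : Fin r → Fin d) :
    (∀ x y : Fin r, s.r x y ↔ g x = g y) ↔ Setoid.ker g = s := by
  constructor
  · intro h
    exact Setoid.ext fun a b => (h a b).symm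
  · rintro rfl x y
    exact Iff.rfl

lemma kerPartSpace_eq (r d : ℕ) (s : Setoid (Fin r)) :
    kerPartSpace r d s =
      Finsupp.supported ℚ ℚ {g : Fin r → Fin d | Setoid.ker g = s} := by
  rw [kerPartSpace, Finsupp.supported_eq_span_single]
  congr 1
  ext v
  simp only [Set.mem_image, Set.mem_setOf_eq]
  constructor
  · rintro ⟨g, hg, rfl⟩
    exact ⟨g, (cond_iff s g).1 hg, rfl⟩
  · rintro ⟨g, hg, rfl⟩
    exact ⟨g, (cond_iff s g).2 hg, rfl⟩


lemma diag_single (d r : ℕ) (σ : Equiv.Perm (Fin d)) (g : Fin r → Fin d) (c : ℚ) :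
    diagAction d r σ (Finsupp.single g c) = Finsupp.single (⇑σ ∘ g) c := by
  simp [diagAction, Finsupp.lmapDomain_apply, Finsupp.mapDomain_single]


/-- `V^{⊗ r}` decomposes as the direct sum over set partitions `s` of `{1,…,r}` into at most
`d` parts of the submodules `N^s`; each `N^s` is `S_d`-invariant and equivariantly isomorphic
to the permutation module `M^{(d − l(s), 1^{l(s)})}`. -/
theorem tensor_power_decomposition (r d : ℕ) :
    (iSupIndep (fun s : {s : Setoid (Fin r) // Nat.card (Quotient s) ≤ d} =>
        kerPartSpace r d s.1)) ∧
    ((⨆ s : {s : Setoid (Fin r) // Nat.card (Quotient s) ≤ d}, kerPartSpace r d s.1) = ⊤) ∧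
    (∀ (s : Setoid (Fin r)) (σ : Equiv.Perm (Fin d)),
        Submodule.map (diagAction d r σ) (kerPartSpace r d s) = kerPartSpace r d s) ∧
    (∀ s : Setoid (Fin r), Nat.card (Quotient s) ≤ d →
      ∃ Ψ : ((Equiv.Perm (Fin d) ⧸
              youngSubgroup d ((d - Nat.card (Quotient s)) ::
                List.replicate (Nat.card (Quotient s)) 1)) →₀ ℚ) →ₗ[ℚ]
            ((Fin r → Fin d) →₀ ℚ),
        Function.Injective Ψ ∧
        LinearMap.range Ψ = kerPartSpace r d s ∧
        ∀ σ : Equiv.Perm (Fin d),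
          Ψ ∘ₗ (Finsupp.lmapDomain ℚ ℚ
              (fun x : Equiv.Perm (Fin d) ⧸ youngSubgroup d ((d - Nat.card (Quotient s)) ::
                List.replicate (Nat.card (Quotient s)) 1) => σ • x))
            = diagAction d r σ ∘ₗ Ψ) := by
  refine ⟨?_, ?_, ?_, ?_⟩
  · -- independence
    intro i
    have h2 : (⨆ j, ⨆ (_ : j ≠ i), kerPartSpace r d j.1) ≤
        Finsupp.supported ℚ ℚ
          (⋃ j ∈ {j : {s : Setoid (Fin r) // Nat.card (Quotient s) ≤ d} | j ≠ i},
            {g : Fin r → Fin d | Setoid.ker g = j.1}) := by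
      refine iSup_le fun j => iSup_le fun hj => ?_
      rw [kerPartSpace_eq]
      exact Finsupp.supported_mono (fun g hg => Set.mem_biUnion (show j ∈ {j | j ≠ i} from hj) hg)
    refine Disjoint.mono_right h2 ?_
    show Disjoint (kerPartSpace r d i.1) _
    rw [kerPartSpace_eq]
    refine Finsupp.disjoint_supported_supported ?_
    rw [Set.disjoint_left]
    rintro g hg1 hg2
    simp only [Set.mem_iUnion, Set.mem_setOf_eq] at hg1 hg2
    obtain ⟨j, hj, hgj⟩ := hg2
    exact hj (Subtype.ext (hgj.symm.trans hg1))
  · -- spanning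
    rw [eq_top_iff, ← Finsupp.supported_univ (M := ℚ) (R := ℚ) (α := Fin r → Fin d),
      Finsupp.supported_eq_span_single, Submodule.span_le]
    rintro v ⟨g, -, rfl⟩
    have hinj : Function.Injective
        (Quotient.lift g (fun a b (h : (Setoid.ker g).r a b) => h) :
          Quotient (Setoid.ker g) → Fin d) := by
      intro q1 q2
      refine Quotient.inductionOn₂ q1 q2 fun a b h => Quotient.sound h
    have hcard : Nat.card (Quotient (Setoid.ker g)) ≤ d := by
      have := Nat.card_le_card_of_injective _ hinj
      simpa using this
    refine Submodule.mem_iSup_of_mem ⟨Setoid.ker g, hcard⟩ ?_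
    exact Submodule.subset_span ⟨g, (cond_iff _ g).2 rfl, rfl⟩
  · -- invariance
    intro s σ
    rw [kerPartSpace, Submodule.map_span]
    congr 1
    ext v
    simp only [Set.mem_image, Set.mem_setOf_eq]
    constructor
    · rintro ⟨w, ⟨g, hg, rfl⟩, rfl⟩
      refine ⟨⇑σ ∘ g, fun x y => (hg x y).trans
        ⟨fun h => congrArg σ h, fun h => σ.injective h⟩, (diag_single d r σ g 1)⟩
    · rintro ⟨g, hg, rfl⟩
      refine ⟨Finsupp.single (⇑σ.symm ∘ g) 1, ⟨⇑σ.symm ∘ g, fun x y => (hg x y).trans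
        ⟨fun h => congrArg σ.symm h, fun h => σ.symm.injective h⟩, rfl⟩, ?_⟩
      rw [diag_single]
      congr 1
      funext x
      exact σ.apply_symm_apply (g x)
  · -- isomorphism with permutation module
    intro s hsd
    classical
    set m := Nat.card (Quotient s) with hm
    set H := youngSubgroup d ((d - m) :: List.replicate m 1) with hH
    let e : Quotient s ≃ Fin m := Finite.equivFin _
    let emb : Fin m → Fin d := fun j => ⟨d - m + j.1, by omega⟩
    have hemb_inj : Function.Injective emb := by
      intro j j' h
      apply Fin.ext
      have := congrArg Fin.val h
      dsimp only [emb] at this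
      omega
    let F : Equiv.Perm (Fin d) → (Fin r → Fin d) :=
      fun τ x => τ (emb (e (Quotient.mk s x)))
    have hF_iff : ∀ τ τ' : Equiv.Perm (Fin d),
        F τ = F τ' ↔ ∀ j, τ (emb j) = τ' (emb j) := by
      intro τ τ'
      constructor
      · intro h j
        have hx : (Quotient.mk s (e.symm j).out) = e.symm j := Quotient.out_eq _
        have h2 := congrFun h ((e.symm j).out)
        dsimp only [F] at h2
        rwa [hx, e.apply_symm_apply] at h2
      · intro h; funext x; exact h _
    have hmemiff : ∀ τ τ' : Equiv.Perm (Fin d),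
        τ⁻¹ * τ' ∈ H ↔ F τ = F τ' := by
      intro τ τ'
      rw [hH, young_mem_iff d m hsd, hF_iff]
      constructor
      · intro h j
        have h1 := h j
        rw [Equiv.Perm.mul_apply] at h1
        have h2 := congrArg τ h1
        rw [Equiv.Perm.inv_def, Equiv.apply_symm_apply] at h2
        exact h2.symm
      · intro h j
        rw [Equiv.Perm.mul_apply]
        have h1 := (h j).symm
        rw [h1]
        exact τ.symm_apply_apply _
    let fbar : (Equiv.Perm (Fin d) ⧸ H) → (Fin r → Fin d) :=
      Quotient.lift F (fun a b hab =>
        (hmemiff a b).mp (QuotientGroup.leftRel_apply.mp hab))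
    have hfbar_mk : ∀ τ : Equiv.Perm (Fin d), fbar (QuotientGroup.mk τ) = F τ :=
      fun τ => rfl
    have hfbar_inj : Function.Injective fbar := by
      intro q1 q2
      refine Quotient.inductionOn₂ q1 q2 fun a b h => ?_
      exact Quotient.sound (QuotientGroup.leftRel_apply.mpr ((hmemiff a b).mpr h))
    refine ⟨Finsupp.lmapDomain ℚ ℚ fbar, ?_, ?_, ?_⟩
    · intro u v h
      exact Finsupp.mapDomain_injective hfbar_inj h
    · rw [LinearMap.range_eq_map, ← Finsupp.supported_univ,
        Finsupp.supported_eq_span_single, Submodule.map_span, kerPartSpace]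
      congr 1
      ext v
      simp only [Set.image_image, Set.image_univ, ← Set.range_comp, Function.comp_def, Set.mem_range, Set.mem_setOf_eq,
        Finsupp.lmapDomain_apply, Finsupp.mapDomain_single]
      constructor
      · rintro ⟨q, rfl⟩
        refine Quotient.inductionOn q fun τ => ?_
        refine ⟨F τ, fun x y => ?_, rfl⟩
        constructor
        · intro hxy
          dsimp only [F]
          rw [Quotient.sound hxy]
        · intro hxy
          dsimp only [F] at hxy
          have h1 := e.injective (hemb_inj (τ.injective hxy))
          exact Quotient.exact h1
      · rintro ⟨g, hg, rfl⟩
        let ι : Fin m → Fin d := fun j => g ((e.symm j).out)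
        have hι_inj : Function.Injective ι := by
          intro j j' h
          have h1 : s.r ((e.symm j).out) ((e.symm j').out) := (hg _ _).mpr h
          have h2 : (Quotient.mk s (e.symm j).out) = (Quotient.mk s (e.symm j').out) :=
            Quotient.sound h1
          rw [Quotient.out_eq, Quotient.out_eq] at h2
          exact e.symm.injective h2
        obtain ⟨τ, hτ⟩ := exists_perm_comp emb ι hemb_inj hι_inj
        refine ⟨QuotientGroup.mk τ, ?_⟩
        congr 1
        rw [hfbar_mk]
        funext x
        dsimp only [F]
        rw [hτ]
        have h3 : s.r ((e.symm (e (Quotient.mk s x))).out) x := by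
          apply Quotient.exact
          rw [Quotient.out_eq, e.symm_apply_apply]
        exact ((hg _ _).mp h3)
    · intro σ
      refine Finsupp.lhom_ext fun q c => ?_
      rw [LinearMap.comp_apply, LinearMap.comp_apply,
        Finsupp.lmapDomain_apply, Finsupp.lmapDomain_apply, Finsupp.mapDomain_single,
        Finsupp.lmapDomain_apply, Finsupp.mapDomain_single, Finsupp.mapDomain_single,
        diag_single]
      congr 1
      refine Quotient.inductionOn q fun τ => ?_
      rw [show σ • (QuotientGroup.mk τ : Equiv.Perm (Fin d) ⧸ H) = QuotientGroup.mk (σ * τ) by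
        rw [MulAction.Quotient.smul_mk]; rfl]
      rw [hfbar_mk, hfbar_mk]
      funext x
      rfl
end

section
/- Let p be a prime, a ≥ 1, and let ρ = (ρ_1,...,ρ_m) be a composition whose parts all satisfy ρ_i < p^a. Then for any integer N ≥ |ρ| + 2p^a, the multinomial coefficients satisfy the congruence: C(N − p^a; N − |ρ| − p^a, ρ_1, ..., ρ_m) ≡ C(N − 2p^a; N − |ρ| − 2p^a, ρ_1, ..., ρ_m) (mod p). -/
/-!
Splitting off one part at a time, `C(n; n - |ρ|, ρ₁, …, ρ_m)` is the product of the binomial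
coefficients `C(n - ρ₁ - ⋯ - ρ_{i-1}, ρ_i)`. Raising `n` by `p^a` raises every top entry by `p^a`,
and `C(x + p^a, r) ≡ C(x, r) (mod p)` for `r < p^a`: by Lucas's theorem, adding `p^a` only changes
the base-`p` digits of `x` from position `a` on, where all digits of `r` vanish.
-/

/-- The multinomial coefficient `C(n; n − |ρ|, ρ₁, …, ρ_m) = n! / ((n − |ρ|)! ρ₁! ⋯ ρ_m!)`,
choosing the parts of the composition `ρ` (and the remainder `n − |ρ|`) from `n`. -/
def multinomC (n : ℕ) (ρ : List ℕ) : ℕ :=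
  Nat.multinomial Finset.univ (Fin.cons (n - ρ.sum) ρ.get)

open Finset

theorem Nat.multinomial_univ_finCons {m : ℕ} (b : ℕ) (g : Fin m → ℕ) :
    Nat.multinomial univ (Fin.cons b g : Fin (m + 1) → ℕ) =
      (b + ∑ i, g i).choose b * Nat.multinomial univ g := by
  rw [Fin.univ_succ, Nat.multinomial_cons]
  simp [Nat.multinomial, Finset.sum_map, Finset.prod_map]

theorem List.sum_univ_get (l : List ℕ) : ∑ i, l.get i = l.sum :=
  Fin.sum_univ_getElem l

theorem Nat.choose_add_prime_pow_modEq {p : ℕ} [hp : Fact p.Prime] (a : ℕ) {x r : ℕ}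
    (hr : r < p ^ a) : (x + p ^ a).choose r ≡ x.choose r [MOD p] := by
  induction a generalizing x r with
  | zero =>
    obtain rfl : r = 0 := by simpa using hr
    simp [Nat.ModEq.refl]
  | succ a ih =>
    have hmod : (x + p ^ (a + 1)) % p = x % p := by rw [pow_succ, Nat.add_mul_mod_self_right]
    have hdiv : (x + p ^ (a + 1)) / p = x / p + p ^ a := by
      rw [pow_succ, Nat.add_mul_div_right _ _ hp.out.pos]
    have hr' : r / p < p ^ a := Nat.div_lt_of_lt_mul (by rwa [mul_comm, ← pow_succ])
    calc (x + p ^ (a + 1)).choose r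
        ≡ (x % p).choose (r % p) * (x / p + p ^ a).choose (r / p) [MOD p] := by
          rw [← hmod, ← hdiv]
          exact Choose.choose_modEq_choose_mod_mul_choose_div_nat
      _ ≡ (x % p).choose (r % p) * (x / p).choose (r / p) [MOD p] := (ih hr').mul_left _
      _ ≡ x.choose r [MOD p] := Choose.choose_modEq_choose_mod_mul_choose_div_nat.symm

lemma multinomC_eq_choose_mul {n : ℕ} {ρ : List ℕ} (h : ρ.sum ≤ n) :
    multinomC n ρ = n.choose ρ.sum * Nat.multinomial univ ρ.get := by
  rw [multinomC, Nat.multinomial_univ_finCons, List.sum_univ_get, Nat.sub_add_cancel h,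
    Nat.choose_symm h]

lemma multinomC_cons {n r : ℕ} {ρ : List ℕ} (h : r + ρ.sum ≤ n) :
    multinomC n (r :: ρ) = n.choose r * multinomC (n - r) ρ := by
  have hget : (r :: ρ).get = Fin.cons r ρ.get := funext fun i => Fin.cases rfl (fun _ => rfl) i
  rw [multinomC_eq_choose_mul (by simpa using h), multinomC_eq_choose_mul (by omega), hget,
    Nat.multinomial_univ_finCons, List.sum_univ_get, List.sum_cons, ← mul_assoc, ← mul_assoc,
    Nat.choose_mul (Nat.le_add_right r _), Nat.add_sub_cancel_left]

lemma multinomC_add_prime_pow_modEq {p : ℕ} [Fact p.Prime] {a : ℕ} {ρ : List ℕ}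
    (hρ : ∀ x ∈ ρ, x < p ^ a) {M : ℕ} (hM : ρ.sum ≤ M) :
    multinomC (M + p ^ a) ρ ≡ multinomC M ρ [MOD p] := by
  induction ρ generalizing M with
  | nil => simp [multinomC, Nat.ModEq.refl]
  | cons r ρ ih =>
    rw [List.sum_cons] at hM
    rw [multinomC_cons (by omega), multinomC_cons hM, Nat.sub_add_comm (by omega)]
    exact (Nat.choose_add_prime_pow_modEq a (hρ r List.mem_cons_self)).mul
      (ih (fun x hx => hρ x (List.mem_cons_of_mem r hx)) (by omega))

theorem multinomial_congruence_mod_p_general (p a : ℕ) (hp : p.Prime)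
    (ρ : List ℕ) (hρ : ∀ x ∈ ρ, x < p ^ a) (N : ℕ) (hN : ρ.sum + 2 * p ^ a ≤ N) :
    multinomC (N - p ^ a) ρ ≡ multinomC (N - 2 * p ^ a) ρ [MOD p] := by
  have : Fact p.Prime := ⟨hp⟩
  rw [show N - p ^ a = N - 2 * p ^ a + p ^ a by omega]
  exact multinomC_add_prime_pow_modEq hρ (by omega)

/-- For a prime `p`, `a ≥ 1`, and a composition `ρ` all of whose parts are `< p^a`, for any
`N ≥ |ρ| + 2·p^a` one has
`C(N − p^a; N − |ρ| − p^a, ρ) ≡ C(N − 2p^a; N − |ρ| − 2p^a, ρ) (mod p)`. -/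
theorem multinomial_congruence_mod_p (p a : ℕ) (hp : p.Prime) (ha : 1 ≤ a)
    (ρ : List ℕ) (hρ : ∀ x ∈ ρ, x < p ^ a) (N : ℕ) (hN : ρ.sum + 2 * p ^ a ≤ N) :
    multinomC (N - p ^ a) ρ ≡ multinomC (N - 2 * p ^ a) ρ [MOD p] :=
  multinomial_congruence_mod_p_general p a hp ρ hρ N hN
end

section
/- Let λ_1 be a scalar in a field of characteristic zero and m a nonnegative integer. For a composition α of the form (λ_1 − m, α_2, ..., α_l) with m = α_2 + ... + α_l, let S = S_{α_2} × ... × S_{α_l} ⊆ S_m, and for σ ∈ S_m let ξ_{q(σ)} denote the endomorphism of M^{(λ_1−m, 1^m)} given by the double coset whose matrix is the block sum of the 1×1 matrix [λ_1−m] with the permutation matrix of σ. Then ξ_{q(σ)} ξ_{q(σ')} = ξ_{q(σ'σ)}, and consequently e_α = (1/|S|) Σ_{σ∈S} ξ_{q(σ)} is an idempotent endomorphism. Concretely in the specialized setting: for n ≥ m, in End_{S_n}(M^{(n−m,1^m)}), the elements ξ_{q(σ)} (σ ∈ S_m) satisfy ξ_{q(σ)} ξ_{q(σ')} = ξ_{q(σ'σ)},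 giving an algebra embedding of Q[S_m]^{op} into End_{S_n}(M^{(n−m,1^m)}), and the image of the symmetrizing idempotent of any subgroup S ≤ S_m is an idempotent whose image is isomorphic to M^{(n−m, α_2,...,α_l)} when S = S_{α_2}×...×S_{α_l}. -/
/-- The permutation module `M^{(n−m,1^m)}` of `S_n`, modelled as the free `ℚ`-module on
injective functions (ordered `m`-tuples of distinct elements) `Fin m ↪ Fin n`. -/
abbrev InjModel (n m : ℕ) := (Fin m ↪ Fin n) →₀ ℚ

/-- The right `S_m`-action `ξ_{q(σ)}` on `M^{(n−m,1^m)}`: permute the `m` positions. -/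
noncomputable def xiPerm (n m : ℕ) (σ : Equiv.Perm (Fin m)) :
    InjModel n m →ₗ[ℚ] InjModel n m :=
  Finsupp.lmapDomain ℚ ℚ (fun f => σ.toEmbedding.trans f)

/-- The left `S_n`-action on `M^{(n−m,1^m)}`. -/
noncomputable def actSn (n m : ℕ) (τ : Equiv.Perm (Fin n)) :
    InjModel n m →ₗ[ℚ] InjModel n m :=
  Finsupp.lmapDomain ℚ ℚ (fun f => f.trans τ.toEmbedding)

open scoped Classical in
/-- The symmetrizing idempotent `(1/|H|) ∑_{σ ∈ H} ξ_{q(σ)}` of a subgroup `H ≤ S_m`. -/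
noncomputable def symmIdem (n m : ℕ) (H : Subgroup (Equiv.Perm (Fin m))) :
    InjModel n m →ₗ[ℚ] InjModel n m :=
  (Nat.card H : ℚ)⁻¹ • ∑ σ : Equiv.Perm (Fin m), if σ ∈ H then xiPerm n m σ else 0


open scoped Classical

theorem blockIdx_cons (a : ℕ) (p : List ℕ) (y : ℕ) :
    blockIdx (a :: p) y = if y < a then 0 else blockIdx p (y - a) + 1 := by
  unfold blockIdx
  rw [← List.countP_eq_length_filter, ← List.countP_eq_length_filter]
  simp only [List.length_cons, List.range_succ_eq_map, List.countP_cons, List.countP_map]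
  by_cases h : y < a
  · rw [if_pos h]
    rw [List.countP_eq_zero.2, if_neg]
    · simp only [List.take_succ_cons, List.take_zero, List.sum_cons, List.sum_nil,
        decide_eq_true_eq]
      grind
    · intro k _
      simp only [Function.comp_apply, Nat.succ_eq_add_one, List.take_succ_cons,
        List.sum_cons, decide_eq_true_eq]
      grind
  · rw [if_neg h]
    have he : ((fun k => decide ((List.take (k + 1) (a :: p)).sum ≤ y)) ∘ Nat.succ)
        = (fun k => decide ((List.take (k + 1) p).sum ≤ y - a)) := by
      funext k
      simp only [Function.comp_apply, Nat.succ_eq_add_one, List.take_succ_cons,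
        List.sum_cons, decide_eq_decide]
      grind
    rw [he, if_pos]
    simp only [List.take_succ_cons, List.take_zero, List.sum_cons, List.sum_nil,
      decide_eq_true_eq]
    grind

def embFin (n m : ℕ) (hmn : m ≤ n) : Fin m ↪ Fin n :=
  ⟨fun i => ⟨n - m + i, by omega⟩, fun a b h => by
    have : n - m + (a : ℕ) = n - m + b := congrArg Fin.val h
    exact Fin.ext (by omega)⟩

theorem exists_perm {n m : ℕ} (hmn : m ≤ n) (f : Fin m ↪ Fin n) :
    ∃ τ : Equiv.Perm (Fin n), ∀ i, τ (embFin n m hmn i) = f i := by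
  set g := embFin n m hmn with hg
  let e1 : Fin m ≃ Set.range g := Equiv.ofInjective g g.injective
  let e2 : Fin m ≃ Set.range f := Equiv.ofInjective f f.injective
  have hcard : Fintype.card (↥(Set.range g)ᶜ) = Fintype.card (↥(Set.range f)ᶜ) := by
    rw [Fintype.card_compl_set, Fintype.card_compl_set,
      ← Fintype.card_congr e1, ← Fintype.card_congr e2]
  obtain ⟨e3⟩ := Fintype.card_eq.mp hcard
  refine ⟨(Equiv.Set.sumCompl (Set.range g)).symm.trans
    (((e1.symm.trans e2).sumCongr e3).trans (Equiv.Set.sumCompl (Set.range f))), ?_⟩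
  intro i
  simp only [Equiv.trans_apply]
  rw [Equiv.Set.sumCompl_symm_apply_of_mem (Set.mem_range_self i)]
  simp [e1, e2]

theorem mem_youngSubgroup {n : ℕ} {α : List ℕ} {σ : Equiv.Perm (Fin n)} :
    σ ∈ youngSubgroup n α ↔ ∀ x : Fin n, blockIdx α (σ x) = blockIdx α x := Iff.rfl

noncomputable def tabl (parts : List ℕ) {n m : ℕ} (f : Fin m ↪ Fin n) (x : Fin n) : ℕ :=
  if h : ∃ i, f i = x then blockIdx parts h.choose + 1 else 0

theorem tabl_eq_of (parts : List ℕ) {n m : ℕ} (f : Fin m ↪ Fin n) {i : Fin m} {x : Fin n}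
    (hx : f i = x) : tabl parts f x = blockIdx parts i + 1 := by
  unfold tabl
  rw [dif_pos ⟨i, hx⟩]
  have h2 : f (⟨i, hx⟩ : ∃ i, f i = x).choose = x := (⟨i, hx⟩ : ∃ i, f i = x).choose_spec
  rw [f.injective (h2.trans hx.symm)]

theorem tabl_eq_zero (parts : List ℕ) {n m : ℕ} (f : Fin m ↪ Fin n) {x : Fin n}
    (hx : ¬ ∃ i, f i = x) : tabl parts f x = 0 := dif_neg hx

theorem coset_eq {n : ℕ} (α : List ℕ) (τ τ' : Equiv.Perm (Fin n)) :
    (QuotientGroup.mk τ : Equiv.Perm (Fin n) ⧸ youngSubgroup n α) = QuotientGroup.mk τ'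
      ↔ ∀ x : Fin n, blockIdx α (τ⁻¹ x) = blockIdx α (τ'⁻¹ x) := by
  rw [QuotientGroup.eq]
  constructor
  · intro h y
    have := h (τ'⁻¹ y)
    simp only [Equiv.Perm.mul_apply] at this
    rw [show τ' (τ'⁻¹ y) = y from τ'.apply_symm_apply y] at this
    exact this
  · intro h x
    have := h (τ' x)
    simp only [Equiv.Perm.mul_apply]
    rw [this, Equiv.Perm.coe_inv, Equiv.symm_apply_apply]

/-- key: any τ extending f computes tabl. -/
theorem blockIdx_inv_eq_tabl {n m : ℕ} (hmn : m ≤ n) (parts : List ℕ) (hp : parts.sum = m)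
    (f : Fin m ↪ Fin n) (τ : Equiv.Perm (Fin n)) (hτ : ∀ i, τ (embFin n m hmn i) = f i)
    (x : Fin n) : blockIdx ((n - m) :: parts) (τ⁻¹ x) = tabl parts f x := by
  by_cases h : ∃ i, f i = x
  · obtain ⟨i, hi⟩ := h
    have hτi : τ⁻¹ x = embFin n m hmn i := by
      rw [← hi, ← hτ i, Equiv.Perm.coe_inv, Equiv.symm_apply_apply]
    rw [hτi, tabl_eq_of parts f hi]
    show blockIdx ((n - m) :: parts) (n - m + (i : ℕ)) = _
    rw [blockIdx_cons, if_neg (by omega), Nat.add_sub_cancel_left]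
  · rw [tabl_eq_zero parts f h]
    have hlt : ((τ⁻¹ x : Fin n) : ℕ) < n - m := by
      by_contra hge
      push_neg at hge
      have hb : ((τ⁻¹ x : Fin n) : ℕ) < n := (τ⁻¹ x).isLt
      refine h ⟨⟨(τ⁻¹ x : Fin n) - (n - m), by omega⟩, ?_⟩
      rw [← hτ ⟨(τ⁻¹ x : Fin n) - (n - m), by omega⟩]
      have : embFin n m hmn ⟨(τ⁻¹ x : Fin n) - (n - m), by omega⟩ = τ⁻¹ x :=
        Fin.ext (by
          show n - m + (((τ⁻¹ x : Fin n) : ℕ) - (n - m)) = ((τ⁻¹ x : Fin n) : ℕ)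
          omega)
      rw [this, Equiv.Perm.coe_inv, Equiv.apply_symm_apply]
    rw [blockIdx_cons, if_pos hlt]

noncomputable def tmap {n m : ℕ} (hmn : m ≤ n) (parts : List ℕ) (f : Fin m ↪ Fin n) :
    Equiv.Perm (Fin n) ⧸ youngSubgroup n ((n - m) :: parts) :=
  QuotientGroup.mk (exists_perm hmn f).choose

theorem tmap_spec {n m : ℕ} (hmn : m ≤ n) (parts : List ℕ) (hp : parts.sum = m)
    (f : Fin m ↪ Fin n) (x : Fin n) :
    blockIdx ((n - m) :: parts) ((exists_perm hmn f).choose⁻¹ x) = tabl parts f x :=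
  blockIdx_inv_eq_tabl hmn parts hp f _ (exists_perm hmn f).choose_spec x

theorem tmap_eq_mk {n m : ℕ} (hmn : m ≤ n) (parts : List ℕ) (hp : parts.sum = m)
    (f : Fin m ↪ Fin n) (τ : Equiv.Perm (Fin n)) (hτ : ∀ i, τ (embFin n m hmn i) = f i) :
    tmap hmn parts f = QuotientGroup.mk τ := by
  rw [tmap, coset_eq]
  intro x
  rw [tmap_spec hmn parts hp f x, blockIdx_inv_eq_tabl hmn parts hp f τ hτ x]

theorem tmap_eq_iff {n m : ℕ} (hmn : m ≤ n) (parts : List ℕ) (hp : parts.sum = m)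
    (f g : Fin m ↪ Fin n) :
    tmap hmn parts f = tmap hmn parts g ↔ ∀ x, tabl parts f x = tabl parts g x := by
  rw [tmap, tmap, coset_eq]
  constructor
  · intro h x
    rw [← tmap_spec hmn parts hp f x, ← tmap_spec hmn parts hp g x]
    exact h x
  · intro h x
    rw [tmap_spec hmn parts hp f x, tmap_spec hmn parts hp g x]
    exact h x

theorem tmap_surj {n m : ℕ} (hmn : m ≤ n) (parts : List ℕ) (hp : parts.sum = m)
    (c : Equiv.Perm (Fin n) ⧸ youngSubgroup n ((n - m) :: parts)) :
    ∃ f, tmap hmn parts f = c := by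
  obtain ⟨τ, rfl⟩ := QuotientGroup.mk_surjective c
  exact ⟨(embFin n m hmn).trans τ.toEmbedding,
    tmap_eq_mk hmn parts hp _ τ (fun i => rfl)⟩

theorem tabl_actSn (parts : List ℕ) {n m : ℕ} (f : Fin m ↪ Fin n) (τ : Equiv.Perm (Fin n))
    (x : Fin n) : tabl parts (f.trans τ.toEmbedding) x = tabl parts f (τ⁻¹ x) := by
  by_cases h : ∃ i, f i = τ⁻¹ x
  · obtain ⟨i, hi⟩ := h
    rw [tabl_eq_of parts f hi,
      tabl_eq_of parts (f.trans τ.toEmbedding) (show τ (f i) = x by rw [hi]; simp)]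
  · rw [tabl_eq_zero parts f h, tabl_eq_zero parts (f.trans τ.toEmbedding)]
    rintro ⟨i, hi⟩
    exact h ⟨i, by rw [← hi]; simp⟩

theorem tmap_actSn {n m : ℕ} (hmn : m ≤ n) (parts : List ℕ) (hp : parts.sum = m)
    (f : Fin m ↪ Fin n) (τ : Equiv.Perm (Fin n)) :
    tmap hmn parts (f.trans τ.toEmbedding) = τ • tmap hmn parts f := by
  conv_rhs => rw [tmap]
  have : τ • (QuotientGroup.mk (exists_perm hmn f).choose :
      Equiv.Perm (Fin n) ⧸ youngSubgroup n ((n - m) :: parts))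
      = QuotientGroup.mk (τ * (exists_perm hmn f).choose) := rfl
  rw [this]
  apply tmap_eq_mk hmn parts hp
  intro i
  show τ ((exists_perm hmn f).choose (embFin n m hmn i)) = _
  rw [(exists_perm hmn f).choose_spec i]
  rfl

theorem tabl_xi (parts : List ℕ) {n m : ℕ} (f : Fin m ↪ Fin n) {σ : Equiv.Perm (Fin m)}
    (hσ : σ ∈ youngSubgroup m parts) (x : Fin n) :
    tabl parts (σ.toEmbedding.trans f) x = tabl parts f x := by
  by_cases h : ∃ i, f i = x
  · obtain ⟨i, hi⟩ := h
    rw [tabl_eq_of parts f hi,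
      tabl_eq_of parts (σ.toEmbedding.trans f)
        (show f (σ (σ⁻¹ i)) = x by rw [Equiv.Perm.coe_inv, Equiv.apply_symm_apply]; exact hi)]
    have := hσ (σ⁻¹ i)
    rw [show σ (σ⁻¹ i) = i from σ.apply_symm_apply i] at this
    rw [this]
  · rw [tabl_eq_zero parts f h, tabl_eq_zero parts (σ.toEmbedding.trans f)]
    rintro ⟨i, hi⟩
    exact h ⟨σ i, hi⟩

theorem tabl_orbit (parts : List ℕ) {n m : ℕ} (f g : Fin m ↪ Fin n)
    (h : ∀ x, tabl parts f x = tabl parts g x) :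
    ∃ σ ∈ youngSubgroup m parts, g = σ.toEmbedding.trans f := by
  have hex : ∀ j : Fin m, ∃ i : Fin m, f i = g j := by
    intro j
    by_contra hc
    have h0 := tabl_eq_zero parts f hc
    rw [h (g j), tabl_eq_of parts g rfl] at h0
    omega
  let u : Fin m → Fin m := fun j => (hex j).choose
  have hu : ∀ j, f (u j) = g j := fun j => (hex j).choose_spec
  have huinj : Function.Injective u := by
    intro a b hab
    apply g.injective
    rw [← hu a, ← hu b, hab]
  let σ : Equiv.Perm (Fin m) := Equiv.ofBijective u (Finite.injective_iff_bijective.mp huinj)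
  have hσapp : ∀ j, σ j = u j := fun j => rfl
  refine ⟨σ, ?_, ?_⟩
  · intro j
    have h1 : tabl parts f (g j) = blockIdx parts (σ j) + 1 :=
      tabl_eq_of parts f (by rw [hσapp, hu])
    have h2 : tabl parts g (g j) = blockIdx parts j + 1 := tabl_eq_of parts g rfl
    rw [h (g j), h2] at h1
    omega
  · ext j
    exact congrArg Fin.val (hu j).symm

theorem xiPerm_comp (n m : ℕ) (σ σ' : Equiv.Perm (Fin m)) :
    xiPerm n m σ ∘ₗ xiPerm n m σ' = xiPerm n m (σ' * σ) := by
  unfold xiPerm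
  apply Finsupp.lhom_ext
  intro f a
  simp only [LinearMap.comp_apply, Finsupp.lmapDomain_apply, Finsupp.mapDomain_single]
  rfl

theorem comp_sum' {R M N P : Type*} [CommSemiring R] [AddCommMonoid M] [Module R M]
    [AddCommMonoid N] [Module R N] [AddCommMonoid P] [Module R P]
    {ι : Type*} (g : M →ₗ[R] N) (s : Finset ι) (f : ι → (P →ₗ[R] M)) :
    g ∘ₗ (∑ i ∈ s, f i) = ∑ i ∈ s, g ∘ₗ f i :=
  LinearMap.ext fun v => by simp [LinearMap.sum_apply, map_sum]

theorem sum_comp' {R M N P : Type*} [CommSemiring R] [AddCommMonoid M] [Module R M]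
    [AddCommMonoid N] [Module R N] [AddCommMonoid P] [Module R P]
    {ι : Type*} (g : P →ₗ[R] M) (s : Finset ι) (f : ι → (M →ₗ[R] N)) :
    (∑ i ∈ s, f i) ∘ₗ g = ∑ i ∈ s, f i ∘ₗ g :=
  LinearMap.ext fun v => by simp [LinearMap.sum_apply]

open scoped Classical

theorem xiSum_right (n m : ℕ) (H : Subgroup (Equiv.Perm (Fin m)))
    {σ : Equiv.Perm (Fin m)} (hσ : σ ∈ H) :
    xiPerm n m σ ∘ₗ (∑ σ' : Equiv.Perm (Fin m), if σ' ∈ H then xiPerm n m σ' else 0)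
      = (∑ σ' : Equiv.Perm (Fin m), if σ' ∈ H then xiPerm n m σ' else 0) := by
  rw [comp_sum']
  refine Fintype.sum_equiv (Equiv.mulRight σ) _ _ ?_
  intro σ'
  simp only [Equiv.coe_mulRight]
  by_cases h : σ' ∈ H
  · rw [if_pos h, xiPerm_comp]
    exact (if_pos (H.mul_mem h hσ)).symm
  · rw [if_neg h, LinearMap.comp_zero]
    exact (if_neg (fun (hm : σ' * σ ∈ H) => h (by simpa using H.mul_mem hm (H.inv_mem hσ)))).symm

theorem cardH_sum' (m : ℕ) (H : Subgroup (Equiv.Perm (Fin m)))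
    {M : Type*} [AddCommMonoid M] [Module ℚ M] (A : M) :
    (∑ σ : Equiv.Perm (Fin m), if σ ∈ H then A else 0) = (Nat.card H : ℚ) • A := by
  rw [Finset.sum_ite, Finset.sum_const, Finset.sum_const_zero, add_zero,
    Nat.card_eq_fintype_card, Fintype.card_subtype]
  simp [← Nat.cast_smul_eq_nsmul ℚ]

theorem cardH_ne (m : ℕ) (H : Subgroup (Equiv.Perm (Fin m))) : (Nat.card H : ℚ) ≠ 0 := by
  have : 0 < Nat.card H := Nat.card_pos
  positivity

theorem comp_symmIdem (n m : ℕ) (H : Subgroup (Equiv.Perm (Fin m)))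
    {M : Type*} [AddCommMonoid M] [Module ℚ M] (Φ : InjModel n m →ₗ[ℚ] M)
    (hΦ : ∀ σ ∈ H, Φ ∘ₗ xiPerm n m σ = Φ) :
    Φ ∘ₗ symmIdem n m H = Φ := by
  unfold symmIdem
  rw [LinearMap.comp_smul,
    comp_sum' Φ Finset.univ (fun σ => if σ ∈ H then xiPerm n m σ else 0)]
  have : ∀ σ : Equiv.Perm (Fin m),
      (Φ ∘ₗ if σ ∈ H then xiPerm n m σ else 0) = if σ ∈ H then Φ else 0 := by
    intro σ
    by_cases h : σ ∈ H
    · rw [if_pos h, if_pos h, hΦ σ h]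
    · rw [if_neg h, if_neg h, LinearMap.comp_zero]
  rw [Finset.sum_congr rfl (fun σ _ => this σ), cardH_sum' m H Φ, smul_smul,
    inv_mul_cancel₀ (cardH_ne m H), one_smul]

theorem xi_comp_symmIdem (n m : ℕ) (H : Subgroup (Equiv.Perm (Fin m)))
    {σ : Equiv.Perm (Fin m)} (hσ : σ ∈ H) :
    xiPerm n m σ ∘ₗ symmIdem n m H = symmIdem n m H := by
  unfold symmIdem
  rw [LinearMap.comp_smul, xiSum_right n m H hσ]

theorem symmIdem_idem (n m : ℕ) (H : Subgroup (Equiv.Perm (Fin m))) :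
    symmIdem n m H ∘ₗ symmIdem n m H = symmIdem n m H := by
  nth_rewrite 1 [symmIdem]
  rw [LinearMap.smul_comp,
    sum_comp' (symmIdem n m H) Finset.univ (fun σ => if σ ∈ H then xiPerm n m σ else 0)]
  have : ∀ σ : Equiv.Perm (Fin m),
      ((if σ ∈ H then xiPerm n m σ else 0) ∘ₗ symmIdem n m H)
        = if σ ∈ H then symmIdem n m H else 0 := by
    intro σ
    by_cases h : σ ∈ H
    · rw [if_pos h, if_pos h, xi_comp_symmIdem n m H h]
    · rw [if_neg h, if_neg h, LinearMap.zero_comp]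
  rw [Finset.sum_congr rfl (fun σ _ => this σ), cardH_sum' m H (symmIdem n m H), smul_smul,
    inv_mul_cancel₀ (cardH_ne m H), one_smul]

theorem xiPerm_actSn (n m : ℕ) (σ : Equiv.Perm (Fin m)) (τ : Equiv.Perm (Fin n)) :
    xiPerm n m σ ∘ₗ actSn n m τ = actSn n m τ ∘ₗ xiPerm n m σ := by
  unfold xiPerm actSn
  apply Finsupp.lhom_ext
  intro f a
  simp only [LinearMap.comp_apply, Finsupp.lmapDomain_apply, Finsupp.mapDomain_single]
  rfl

theorem xiPerm_li (n m : ℕ) (hmn : m ≤ n) :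
    LinearIndependent ℚ (fun σ : Equiv.Perm (Fin m) => xiPerm n m σ) := by
  let emb : Fin m ↪ Fin n := Fin.castLEEmb hmn
  have hinj : Function.Injective (fun σ : Equiv.Perm (Fin m) => σ.toEmbedding.trans emb) := by
    intro σ σ' h
    ext x
    have h2 : emb (σ x) = emb (σ' x) :=
      congrFun (congrArg (fun g : Fin m ↪ Fin n => (g : Fin m → Fin n)) h) x
    exact congrArg Fin.val (emb.injective h2)
  have hli : LinearIndependent ℚ
      (fun g : Fin m ↪ Fin n => Finsupp.single g (1 : ℚ)) :=
    (Finsupp.basisSingleOne (R := ℚ) (ι := Fin m ↪ Fin n)).linearIndependent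
  have hli2 := hli.comp _ hinj
  apply LinearIndependent.of_comp (LinearMap.applyₗ (Finsupp.single emb 1))
  convert hli2 using 1
  funext σ
  simp [xiPerm, Function.comp, Finsupp.mapDomain_single]
  rfl

/-- In `End_{S_n}(M^{(n−m,1^m)})`: the elements `ξ_{q(σ)}` commute with the `S_n`-action and
satisfy `ξ_{q(σ)} ξ_{q(σ')} = ξ_{q(σ'σ)}`, giving an embedding of `ℚ[S_m]^{op}`; the
symmetrizer of any subgroup gives an idempotent, and for a Young subgroup
`S_{α₂} × ⋯ × S_{α_l}` the image of this idempotent is equivariantly isomorphic to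
`M^{(n−m, α₂, …, α_l)}`. -/
theorem opposite_group_algebra_action_and_young_idempotents
    (n m : ℕ) (hmn : m ≤ n) :
    (∀ σ σ' : Equiv.Perm (Fin m), xiPerm n m σ ∘ₗ xiPerm n m σ' = xiPerm n m (σ' * σ)) ∧
    (∀ (σ : Equiv.Perm (Fin m)) (τ : Equiv.Perm (Fin n)),
      xiPerm n m σ ∘ₗ actSn n m τ = actSn n m τ ∘ₗ xiPerm n m σ) ∧
    (LinearIndependent ℚ (fun σ : Equiv.Perm (Fin m) => xiPerm n m σ)) ∧
    (∀ H : Subgroup (Equiv.Perm (Fin m)),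
      symmIdem n m H ∘ₗ symmIdem n m H = symmIdem n m H) ∧
    (∀ parts : List ℕ, parts.sum = m →
      ∃ Φ : InjModel n m →ₗ[ℚ]
          ((Equiv.Perm (Fin n) ⧸ youngSubgroup n ((n - m) :: parts)) →₀ ℚ),
        (∀ τ : Equiv.Perm (Fin n),
          Φ ∘ₗ actSn n m τ =
            (Finsupp.lmapDomain ℚ ℚ
              (fun x : Equiv.Perm (Fin n) ⧸ youngSubgroup n ((n - m) :: parts) => τ • x)) ∘ₗ Φ) ∧
        LinearMap.range (Φ ∘ₗ symmIdem n m (youngSubgroup m parts)) = ⊤ ∧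
        (∀ v ∈ LinearMap.range (symmIdem n m (youngSubgroup m parts)),
          Φ v = 0 → v = 0)) := by
  refine ⟨xiPerm_comp n m, xiPerm_actSn n m, xiPerm_li n m hmn, symmIdem_idem n m, ?_⟩
  intro parts hp
  refine ⟨Finsupp.lmapDomain ℚ ℚ (tmap hmn parts), ?_, ?_, ?_⟩
  · -- equivariance
    intro τ
    apply Finsupp.lhom_ext
    intro f a
    simp only [LinearMap.comp_apply, actSn, Finsupp.lmapDomain_apply,
      Finsupp.mapDomain_single, Representation.ofMulAction_single]
    rw [tmap_actSn hmn parts hp f τ]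
  · -- range of Φ ∘ e is ⊤
    have hΦxi : ∀ σ ∈ youngSubgroup m parts,
        (Finsupp.lmapDomain ℚ ℚ (tmap hmn parts) : InjModel n m →ₗ[ℚ] _)
          ∘ₗ xiPerm n m σ = Finsupp.lmapDomain ℚ ℚ (tmap hmn parts) := by
      intro σ hσ
      apply Finsupp.lhom_ext
      intro f a
      simp only [LinearMap.comp_apply, xiPerm, Finsupp.lmapDomain_apply,
        Finsupp.mapDomain_single]
      congr 1
      rw [tmap_eq_iff hmn parts hp]
      exact tabl_xi parts f hσ
    rw [comp_symmIdem n m (youngSubgroup m parts) _ hΦxi, eq_top_iff]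
    rintro v -
    induction v using Finsupp.induction_linear with
    | zero => exact zero_mem _
    | add f g hf hg => exact add_mem hf hg
    | single c b =>
      obtain ⟨f, hf⟩ := tmap_surj hmn parts hp c
      exact ⟨Finsupp.single f b, by
        simp only [Finsupp.lmapDomain_apply, Finsupp.mapDomain_single, hf]⟩
  · -- injectivity on the range of e
    intro v hv hΦv
    obtain ⟨w, hw⟩ := hv
    have hinv : ∀ σ ∈ youngSubgroup m parts, xiPerm n m σ v = v := by
      intro σ hσ
      rw [← hw]
      exact LinearMap.congr_fun (xi_comp_symmIdem n m (youngSubgroup m parts) hσ) w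
    ext f
    rw [Finsupp.zero_apply]
    by_contra hvf
    have hconst : ∀ a : Fin m ↪ Fin n, tmap hmn parts a = tmap hmn parts f → v a = v f := by
      intro a haf
      obtain ⟨σ, hσ, rfl⟩ := tabl_orbit parts f a
        ((tmap_eq_iff hmn parts hp f a).mp haf.symm)
      have hinj : Function.Injective
          (fun g : Fin m ↪ Fin n => σ.toEmbedding.trans g) := by
        intro g g' hgg'
        ext x
        have := congrFun (congrArg (fun u : Fin m ↪ Fin n => (u : Fin m → Fin n)) hgg')
          (σ⁻¹ x)
        simp only [Function.Embedding.trans_apply, Equiv.coe_toEmbedding,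
          Equiv.Perm.coe_inv, Equiv.apply_symm_apply] at this
        exact congrArg Fin.val this
      calc v (σ.toEmbedding.trans f)
          = (xiPerm n m σ v) (σ.toEmbedding.trans f) := by rw [hinv σ hσ]
        _ = v f := by
            rw [xiPerm, Finsupp.lmapDomain_apply, Finsupp.mapDomain_apply hinj]
    have hmem : f ∈ v.support := Finsupp.mem_support_iff.mpr hvf
    have hval : (Finsupp.lmapDomain ℚ ℚ (tmap hmn parts) v) (tmap hmn parts f)
        = ∑ a ∈ v.support, if tmap hmn parts a = tmap hmn parts f then v a else 0 := by
      simp only [Finsupp.lmapDomain_apply, Finsupp.mapDomain, Finsupp.sum_apply,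
        Finsupp.single_apply, Finsupp.sum, Finsupp.finset_sum_apply]
    rw [hΦv] at hval
    have hsum : (0 : ℚ) = ∑ a ∈ v.support,
        if tmap hmn parts a = tmap hmn parts f then v f else 0 := by
      calc (0 : ℚ)
          = ∑ a ∈ v.support, if tmap hmn parts a = tmap hmn parts f then v a else 0 := by
            simpa using hval
        _ = _ := Finset.sum_congr rfl (fun a _ => by
            by_cases hc : tmap hmn parts a = tmap hmn parts f
            · rw [if_pos hc, if_pos hc, hconst a hc]
            · rw [if_neg hc, if_neg hc])
    rw [← Finset.sum_filter, Finset.sum_const] at hsum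
    have hfmem : f ∈ v.support.filter (fun a => tmap hmn parts a = tmap hmn parts f) :=
      Finset.mem_filter.mpr ⟨hmem, rfl⟩
    have hcard : (v.support.filter
        (fun a => tmap hmn parts a = tmap hmn parts f)).card ≠ 0 :=
      Finset.card_ne_zero_of_mem hfmem
    rw [nsmul_eq_mul] at hsum
    have hcast : ((v.support.filter
        (fun a => tmap hmn parts a = tmap hmn parts f)).card : ℚ) ≠ 0 :=
      Nat.cast_ne_zero.mpr hcard
    rcases mul_eq_zero.mp hsum.symm with h | h
    · exact hcast h
    · exact hvf h
end
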